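/- If E is not a parent of Y and j ∈ {1, …, d} satisfies j ∉ PA_Y ∩ (CH_E ∪ PA(AN_Y ∩ CH_E)), then there exists an invariant set S with j ∉ S. -/

import Mathlib

/-- Nodes of the graph: the environment node `E`, predictor nodes `V j` for
`j ∈ {1, …, d}` (represented by `Fin d`), and the response node `Y`. -/
inductive Node (d : ℕ) : Type where
  | E : Node d
  | V : Fin d → Node d
  | Y : Node d
deriving DecidableEq

/-- A directed acyclic graph on `{E} ∪ {1, …, d} ∪ {Y}` in which `E` has no
parents (`E` is exogenous). -/
structure CGraph (d : ℕ) where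
  adj : Node d → Node d → Prop
  acyclic : ∀ v, ¬ Relation.TransGen adj v v
  exogenous : ∀ v, ¬ adj v Node.E

namespace CGraph

variable {d : ℕ} (G : CGraph d)

/-- Undirected adjacency: an edge between `u` and `v` in either direction. -/
def Edge (u v : Node d) : Prop := G.adj u v ∨ G.adj v u

/-- `p` is a path between `a` and `b`: a duplicate-free list of nodes starting
at `a`, ending at `b`, with consecutive nodes adjacent (in either direction). -/
def IsPath (p : List (Node d)) (a b : Node d) : Prop :=
  p.head? = some a ∧ p.getLast? = some b ∧ p.Nodup ∧ p.Chain' G.Edge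

/-- `x` is a (strict) descendant of `v`. -/
def Desc (v x : Node d) : Prop := Relation.TransGen G.adj v x

/-- The consecutive triple `u, m, w` on a path blocks the path given `C`:
either `m` is a non-collider lying in `C`, or `m` is a collider such that
neither `m` nor any of its descendants lies in `C`. -/
def BlockedAt (C : Set (Node d)) (u m w : Node d) : Prop :=
  (¬ (G.adj u m ∧ G.adj w m) ∧ m ∈ C) ∨
  ((G.adj u m ∧ G.adj w m) ∧ m ∉ C ∧ ∀ x, G.Desc m x → x ∉ C)

/-- A path `p` is blocked by `C` if some consecutive triple on it blocks it. -/
def Blocked (C : Set (Node d)) (p : List (Node d)) : Prop :=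
  ∃ q u m w r, p = q ++ u :: m :: w :: r ∧ G.BlockedAt C u m w

/-- `a` and `b` are d-separated given `C`: every path between them is blocked. -/
def DSep (a b : Node d) (C : Set (Node d)) : Prop :=
  ∀ p, G.IsPath p a b → G.Blocked C p

/-- `S ⊆ {1, …, d}` is invariant if `E` and `Y` are d-separated given `S`. -/
def Invariant (S : Set (Fin d)) : Prop := G.DSep Node.E Node.Y (Node.V '' S)

/-- `S` is minimally invariant if it is invariant and no strict subset of `S`
is invariant. -/
def MinInvariant (S : Set (Fin d)) : Prop :=
  G.Invariant S ∧ ∀ S', S' ⊂ S → ¬ G.Invariant S'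

/-- `S_AS`: the union of all minimally invariant sets. -/
def SAS : Set (Fin d) := ⋃₀ {S | G.MinInvariant S}

/-- `S_ICP`: the intersection of all invariant sets (`∅` if there are none). -/
def SICP : Set (Fin d) :=
  {j | (∃ S, G.Invariant S) ∧ ∀ S, G.Invariant S → j ∈ S}

/-- `S_AS^m`: the union of all minimally invariant sets of cardinality `≤ m`. -/
def SASm (m : ℕ) : Set (Fin d) := ⋃₀ {S | G.MinInvariant S ∧ S.ncard ≤ m}

/-- The parents of `Y` among `{1, …, d}`. -/
def paY : Set (Fin d) := {j | G.adj (Node.V j) Node.Y}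

/-- The children of `E` among `{1, …, d}`. -/
def chE : Set (Fin d) := {j | G.adj Node.E (Node.V j)}

/-- The ancestors of `Y` among `{1, …, d}`. -/
def anY : Set (Fin d) := {j | Relation.TransGen G.adj (Node.V j) Node.Y}

/-- `PA(A)`: the union of the parent sets of the elements of `A ⊆ {1, …, d}`. -/
def paOf (A : Set (Fin d)) : Set (Fin d) := {j | ∃ i ∈ A, G.adj (Node.V j) (Node.V i)}

end CGraph

/-! The witness is `S = AN_Y \ {j}`; read a d-connecting path backwards, from `Y` to `E`.
Since `E` has no parents, an edge of the path pointing towards `E` must be followed by a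
collider before `E` is reached, so its head is an ancestor of a collider, hence of `Y`
(colliders of a connecting path are ancestors of `S ⊆ AN_Y`). Therefore the node after `Y`
is a parent of `Y`, a non-collider outside `S`, so it is `V j`. The next node `w` is then an
ancestor of `Y` other than `V j`, so it lies in `S` and is a collider `V j → w ← v`; now `v`
is a non-collider ancestor of `Y`, so it can only be `E`. Hence `j ∈ PA(AN_Y ∩ CH_E)`, or
`j ∈ CH_E` when `w = E`. -/

namespace CGraph

open Relation

variable {d : ℕ} (G : CGraph d)

theorem adj_asymm {u v : Node d} (huv : G.adj u v) : ¬ G.adj v u := fun hvu =>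
  G.acyclic u (.head huv (.single hvu))

theorem blockedAt_comm {C : Set (Node d)} {u m w : Node d} :
    G.BlockedAt C u m w ↔ G.BlockedAt C w m u := by
  simp only [BlockedAt, and_comm (a := G.adj u m)]

theorem IsPath.reverse {p : List (Node d)} {a b : Node d} (hp : G.IsPath p a b) :
    G.IsPath p.reverse b a := by
  obtain ⟨hhead, hlast, hnodup, hchain⟩ := hp
  refine ⟨by rwa [List.head?_reverse], by rwa [List.getLast?_reverse],
    List.nodup_reverse.2 hnodup, List.isChain_reverse.2 ?_⟩
  exact hchain.imp fun _ _ => Or.symm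

theorem Blocked.reverse {C : Set (Node d)} {p : List (Node d)} (hp : G.Blocked C p) :
    G.Blocked C p.reverse := by
  obtain ⟨q, u, m, w, r, rfl, hb⟩ := hp
  exact ⟨r.reverse, w, m, u, q.reverse, by simp, G.blockedAt_comm.1 hb⟩

theorem DSep.symm {a b : Node d} {C : Set (Node d)} (h : G.DSep a b C) : G.DSep b a C :=
  fun p hp => by simpa using (h _ hp.reverse).reverse

theorem Blocked.cons {C : Set (Node d)} {p : List (Node d)} (x : Node d)
    (hp : G.Blocked C p) : G.Blocked C (x :: p) := by
  obtain ⟨q, u, m, w, r, rfl, hb⟩ := hp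
  exact ⟨x :: q, u, m, w, r, rfl, hb⟩

theorem BlockedAt.blocked {C : Set (Node d)} {u m w : Node d} (r : List (Node d))
    (h : G.BlockedAt C u m w) : G.Blocked C (u :: m :: w :: r) :=
  ⟨[], u, m, w, r, rfl, h⟩

theorem adj_and_adj_of_not_blockedAt {C : Set (Node d)} {u m w : Node d}
    (h : ¬ G.BlockedAt C u m w) (hm : m ∈ C) : G.adj u m ∧ G.adj w m :=
  not_not.1 fun hcol => h (.inl ⟨hcol, hm⟩)

theorem transGen_of_not_blockedAt {C : Set (Node d)} {t u m w : Node d}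
    (hC : ∀ c ∈ C, TransGen G.adj c t) (h : ¬ G.BlockedAt C u m w)
    (hu : G.adj u m) (hw : G.adj w m) : TransGen G.adj m t := by
  by_cases hm : m ∈ C
  · exact hC m hm
  · obtain ⟨x, hmx, hx⟩ : ∃ x, G.Desc m x ∧ x ∈ C := by
      by_contra! hdesc
      exact h (.inr ⟨⟨hu, hw⟩, hm, hdesc⟩)
    exact hmx.trans (hC x hx)

theorem transGen_of_adj_of_not_blocked {C : Set (Node d)} {t z : Node d}
    (hC : ∀ c ∈ C, TransGen G.adj c t) (hz : ∀ v, ¬ G.adj v z) :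
    ∀ {a b : Node d} {rest : List (Node d)}, (b :: rest).getLast? = some z →
      (b :: rest).IsChain G.Edge → ¬ G.Blocked C (a :: b :: rest) → G.adj a b →
      TransGen G.adj b t
  | a, b, [], hlast, _, _, hab => by
    obtain rfl : b = z := by simpa using hlast
    exact absurd hab (hz a)
  | a, b, c :: rest, hlast, hchain, hconn, hab => by
    rw [List.isChain_cons_cons] at hchain
    rcases hchain.1 with hbc | hcb
    · exact .head hbc <| transGen_of_adj_of_not_blocked hC hz
        (by rwa [List.getLast?_cons_cons] at hlast) hchain.2 (mt (Blocked.cons G a) hconn) hbc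
    · exact G.transGen_of_not_blockedAt hC (mt (BlockedAt.blocked G rest) hconn) hab hcb

theorem transGen_of_mem_image_anY {S : Set (Fin d)} (hS : S ⊆ G.anY) :
    ∀ c ∈ Node.V '' S, TransGen G.adj c Node.Y := by
  rintro _ ⟨s, hs, rfl⟩
  exact hS hs

variable {j : Fin d}

theorem mem_image_anY_diff {n : Node d} (hn : TransGen G.adj n Node.Y)
    (hE : n ≠ Node.E) (hj : n ≠ Node.V j) : n ∈ Node.V '' (G.anY \ {j}) := by
  cases n with
  | E => exact absurd rfl hE
  | Y => exact absurd hn (G.acyclic _)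
  | V s => exact ⟨s, ⟨hn, fun hs => hj (congrArg Node.V hs)⟩, rfl⟩

theorem eq_V_and_adj_Y_of_not_blocked (h : ¬ G.adj Node.E Node.Y) {x w : Node d}
    {rest : List (Node d)} (hlast : (x :: w :: rest).getLast? = some Node.E)
    (hchain : (Node.Y :: x :: w :: rest).IsChain G.Edge)
    (hconn : ¬ G.Blocked (Node.V '' (G.anY \ {j})) (Node.Y :: x :: w :: rest)) :
    x = Node.V j ∧ G.adj x Node.Y := by
  have hC := G.transGen_of_mem_image_anY (S := G.anY \ {j}) Set.sdiff_subset
  rw [List.isChain_cons_cons] at hchain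
  have hxY : G.adj x Node.Y := hchain.1.resolve_left fun hYx =>
    G.acyclic _ (.head hYx (G.transGen_of_adj_of_not_blocked hC G.exogenous hlast hchain.2
      hconn hYx))
  refine ⟨not_not.1 fun hxj => ?_, hxY⟩
  have hx := G.mem_image_anY_diff (.single hxY) (fun hxE => h (hxE ▸ hxY)) hxj
  exact G.adj_asymm hxY (G.adj_and_adj_of_not_blockedAt
    (mt (BlockedAt.blocked G rest) hconn) hx).1

theorem adj_E_and_adj_V_of_not_blocked {w : Node d} {rest : List (Node d)}
    (hlast : (w :: rest).getLast? = some Node.E)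
    (hchain : (Node.V j :: w :: rest).IsChain G.Edge) (hnodup : (Node.V j :: w :: rest).Nodup)
    (hconn : ¬ G.Blocked (Node.V '' (G.anY \ {j})) (Node.V j :: w :: rest))
    (hjY : G.adj (Node.V j) Node.Y) (hwE : w ≠ Node.E) :
    G.adj Node.E w ∧ G.adj (Node.V j) w ∧ TransGen G.adj w Node.Y := by
  have hC := G.transGen_of_mem_image_anY (S := G.anY \ {j}) Set.sdiff_subset
  rw [List.isChain_cons_cons] at hchain
  have hwY : TransGen G.adj w Node.Y := by
    rcases hchain.1 with hjw | hwj
    · exact G.transGen_of_adj_of_not_blocked hC G.exogenous hlast hchain.2 hconn hjw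
    · exact .head hwj (.single hjY)
  match rest with
  | [] => exact absurd (by simpa using hlast) hwE
  | v :: rest =>
  have hw := G.mem_image_anY_diff hwY hwE fun hwj : w = Node.V j => by simp [hwj] at hnodup
  obtain ⟨hjw, hvw⟩ := G.adj_and_adj_of_not_blockedAt (mt (BlockedAt.blocked G rest) hconn) hw
  match rest with
  | [] =>
    obtain rfl : v = Node.E := by simpa using hlast
    exact ⟨hvw, hjw, hwY⟩
  | u :: rest =>
  have hE : Node.E ∈ u :: rest :=
    List.mem_of_getLast? (by simpa only [List.getLast?_cons_cons] using hlast)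
  have hvE : v ≠ Node.E := by rintro rfl; simp [hE] at hnodup
  have hv := G.mem_image_anY_diff (.head hvw hwY) hvE fun hvj : v = Node.V j => by
    simp [hvj] at hnodup
  exact absurd (G.adj_and_adj_of_not_blockedAt
    (mt (BlockedAt.blocked G rest) (mt (Blocked.cons G _) hconn)) hv).1 (G.adj_asymm hvw)

end CGraph

/-- if `E` is not a parent of `Y` and
`j ∉ PA_Y ∩ (CH_E ∪ PA(AN_Y ∩ CH_E))`, then there exists an invariant set `S`
with `j ∉ S`. -/
theorem exists_invariant_not_mem {d : ℕ} (G : CGraph d)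
    (h : ¬ G.adj Node.E Node.Y) (j : Fin d)
    (hj : j ∉ G.paY ∩ (G.chE ∪ G.paOf (G.anY ∩ G.chE))) :
    ∃ S : Set (Fin d), G.Invariant S ∧ j ∉ S := by
  refine ⟨G.anY \ {j}, CGraph.DSep.symm G fun p hp => ?_, fun hjS => hjS.2 rfl⟩
  obtain ⟨hhead, hlast, hnodup, hchain⟩ := hp
  by_contra hconn
  match p, hhead with
  | [_], rfl => simp at hlast
  | [_, x], rfl =>
    obtain rfl : x = Node.E := by simpa using hlast
    rcases List.isChain_pair.1 hchain with hYE | hEY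
    exacts [G.exogenous _ hYE, h hEY]
  | _ :: x :: w :: rest, rfl =>
    rw [List.getLast?_cons_cons] at hlast
    obtain ⟨rfl, hjY⟩ := G.eq_V_and_adj_Y_of_not_blocked h hlast hchain hconn
    simp only [Set.mem_inter_iff, Set.mem_union, not_and, not_or] at hj
    obtain ⟨hjE, hjpa⟩ := hj hjY
    rw [List.getLast?_cons_cons] at hlast
    obtain ⟨-, hchain⟩ := List.isChain_cons_cons.1 hchain
    obtain ⟨hEw, hjw, hwY⟩ := G.adj_E_and_adj_V_of_not_blocked hlast hchain hnodup.of_cons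
      (mt (CGraph.Blocked.cons G _) hconn) hjY fun hwE => by
        subst hwE
        exact (List.isChain_cons_cons.1 hchain).1.elim (G.exogenous _) hjE
    cases w with
    | E => exact G.exogenous _ hEw
    | Y => simp at hnodup
    | V s => exact hjpa ⟨s, ⟨hwY, hEw⟩, hjw⟩
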